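/- Let P(λ) = λ(J₁+R₁) + (J₂+R₂) be an n×n complex posH pencil such that for every x ∈ ℂⁿ the real number −(x*R₁x)(x*R₂x) + (x*J₁x)(x*J₂x) is ≤ 0, and such that P(λ) has no common isotropic vector, i.e., there is no nonzero x ∈ ℂⁿ with x*(J₁+R₁)x = 0 and x*(J₂+R₂)x = 0. Then the numerical range of P(λ) is contained in the closed left half-plane: whenever μ ∈ ℂ and x ∈ ℂⁿ is nonzero with x*(μ(J₁+R₁) + (J₂+R₂))x = 0, one has Re μ ≤ 0. -/

import Mathlib

/-!
Write `cᵢ = x*(Jᵢ+Rᵢ)x = aᵢ + jᵢ` with `aᵢ = x*Rᵢx` real and `jᵢ = x*Jᵢx` imaginary. The sign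
hypothesis says exactly that `Re(c₁ c̄₂) = a₁a₂ - j₁j₂ ≥ 0`, and the absence of a common isotropic
vector forces `c₁ ≠ 0` whenever `μ c₁ + c₂ = 0`. Then `μ |c₁|² = -c₂ c̄₁`, whose real part is `≤ 0`.
-/

open Matrix ComplexConjugate
open scoped ComplexOrder

namespace Complex

theorem re_nonpos_of_mul_add_eq_zero {μ c d : ℂ} (hc : c ≠ 0) (hcd : 0 ≤ (c * conj d).re)
    (h : μ * c + d = 0) : μ.re ≤ 0 := by
  have hd : d = -(μ * c) := eq_neg_of_add_eq_zero_right h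
  have hre : (c * conj d).re = -(μ.re * normSq c) := by
    rw [hd, map_neg, map_mul, mul_neg, mul_left_comm, mul_conj]
    simp
  have hpos : 0 < normSq c := normSq_pos.mpr hc
  nlinarith

theorem re_add_mul_conj_add {a₁ a₂ j₁ j₂ : ℂ} (ha₁ : a₁.im = 0) (ha₂ : a₂.im = 0)
    (hj₁ : j₁.re = 0) (hj₂ : j₂.re = 0) :
    ((j₁ + a₁) * conj (j₂ + a₂)).re = -(-a₁ * a₂ + j₁ * j₂).re := by
  simp only [mul_re, add_re, add_im, conj_re, conj_im, neg_re, ha₁, ha₂, hj₁, hj₂]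
  ring

end Complex

namespace Matrix

variable {ι : Type*} [Fintype ι]

theorem re_star_dotProduct_mulVec_self_of_conjTranspose_eq_neg {J : Matrix ι ι ℂ} (hJ : Jᴴ = -J)
    (x : ι → ℂ) : (star x ⬝ᵥ (J *ᵥ x)).re = 0 := by
  have hconj : conj (star x ⬝ᵥ (J *ᵥ x)) = -(star x ⬝ᵥ (J *ᵥ x)) := by
    change star _ = _
    rw [← dotProduct_neg, ← neg_mulVec, ← hJ, ← star_dotProduct_star, star_mulVec, star_star,
      dotProduct_mulVec]
  have := congrArg Complex.re hconj
  simp only [Complex.conj_re, Complex.neg_re] at this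
  linarith

theorem star_dotProduct_smul_add_mulVec (μ : ℂ) (A B : Matrix ι ι ℂ) (x : ι → ℂ) :
    star x ⬝ᵥ ((μ • A + B) *ᵥ x) = μ * (star x ⬝ᵥ (A *ᵥ x)) + star x ⬝ᵥ (B *ᵥ x) := by
  rw [add_mulVec, smul_mulVec, dotProduct_add, dotProduct_smul, smul_eq_mul]

end Matrix

/-- Theorem 4.15(a): let `P(λ) = λ(J₁+R₁) + (J₂+R₂)` be a posH pencil such that
`-(x*R₁x)(x*R₂x) + (x*J₁x)(x*J₂x) ≤ 0` for all `x` and such that `P(λ)` has no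
common isotropic vector. Then the numerical range of `P(λ)` is contained in the
closed left half-plane. -/
theorem posH_numrange_left_half_plane_of_no_isotropic {n : ℕ}
    (J₁ J₂ R₁ R₂ : Matrix (Fin n) (Fin n) ℂ)
    (hJ₁ : J₁ᴴ = -J₁) (hJ₂ : J₂ᴴ = -J₂)
    (hR₁ : R₁.PosSemidef) (hR₂ : R₂.PosSemidef)
    (hcond : ∀ x : Fin n → ℂ,
      (-(star x ⬝ᵥ (R₁ *ᵥ x)) * (star x ⬝ᵥ (R₂ *ᵥ x)) +
        (star x ⬝ᵥ (J₁ *ᵥ x)) * (star x ⬝ᵥ (J₂ *ᵥ x))).re ≤ 0)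
    (hiso : ¬ ∃ x : Fin n → ℂ, x ≠ 0 ∧
      star x ⬝ᵥ ((J₁ + R₁) *ᵥ x) = 0 ∧ star x ⬝ᵥ ((J₂ + R₂) *ᵥ x) = 0) :
    ∀ (μ : ℂ) (x : Fin n → ℂ), x ≠ 0 →
      star x ⬝ᵥ ((μ • (J₁ + R₁) + (J₂ + R₂)) *ᵥ x) = 0 → μ.re ≤ 0 := by
  intro μ x hx hμ
  rw [star_dotProduct_smul_add_mulVec] at hμ
  have hc₁ : star x ⬝ᵥ ((J₁ + R₁) *ᵥ x) ≠ 0 := fun h₁ ↦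
    hiso ⟨x, hx, h₁, by rwa [h₁, mul_zero, zero_add] at hμ⟩
  refine Complex.re_nonpos_of_mul_add_eq_zero hc₁ ?_ hμ
  rw [add_mulVec, add_mulVec, dotProduct_add, dotProduct_add,
    Complex.re_add_mul_conj_add (hR₁.isHermitian.im_star_dotProduct_mulVec_self x)
      (hR₂.isHermitian.im_star_dotProduct_mulVec_self x)
      (re_star_dotProduct_mulVec_self_of_conjTranspose_eq_neg hJ₁ x)
      (re_star_dotProduct_mulVec_self_of_conjTranspose_eq_neg hJ₂ x)]
  linarith [hcond x]
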